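/- arXiv:2008.03480 — 12 statements merged into one kernel-verified Lean document; each statement's English description precedes it below -/
import Mathlib

section
/- Let m, κ, h ∈ ℝ with h ≠ 0, and let x₁, p₁, p₂ ∈ ℝ with r := √(x₁² + h²) > 0. Define the angular momentum L := x₁p₂ − hp₁ and the perpendicular component of the Laplace–Runge–Lenz vector A₂ := −p₁L − mκh/r at the collision point (x₁, h). After elastic reflection at the wall (p₂ ↦ −p₂, so L' := −x₁p₂ − hp₁ and A₂' := −p₁L' − mκh/r), one has (L')² − 2hA₂' = L² − 2hA₂. In other words, the quantity D = L² − 2hA₂ is conserved by the reflection (Theorem 1, Gallavotti–Jauslin). -/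
/-- Conservation of D = L² − 2hA₂ under elastic reflection at the wall x₂ = h
(Theorem 1, Gallavotti–Jauslin). -/
theorem reflection_conserves_D (m κ h x₁ p₁ p₂ r : ℝ)
    (hh : h ≠ 0) (hr : r = Real.sqrt (x₁ ^ 2 + h ^ 2)) (hrpos : r > 0)
    (L L' A₂ A₂' : ℝ)
    (hL : L = x₁ * p₂ - h * p₁)
    (hA₂ : A₂ = -p₁ * L - m * κ * h / r)
    (hL' : L' = -(x₁ * p₂) - h * p₁)
    (hA₂' : A₂' = -p₁ * L' - m * κ * h / r) :
    L' ^ 2 - 2 * h * A₂' = L ^ 2 - 2 * h * A₂ := by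
  subst hL hL' hA₂ hA₂'; ring
end

section
/- Let E, L, A₁, A₂ ∈ ℝ (or ℂ) satisfy the Kepler relation 2EL² = A₁² + A₂² − 1, and set D := L² − 2A₂. Then A₁² + (A₂ − 2E)² = 1 + 2DE + 4E². Consequently, for fixed values of D and E, the Laplace–Runge–Lenz vector (A₁, A₂) moves on the circle of radius R = √(1 + 2DE + 4E²) centred at (0, 2E). -/
/-- For fixed values of D = L² − 2A₂ and the energy E, the Laplace–Runge–Lenz
vector (A₁, A₂) moves on the circle of radius √(1 + 2DE + 4E²) centred at (0, 2E). -/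
theorem LRL_on_circle (E L A₁ A₂ D : ℝ)
    (hKepler : 2 * E * L ^ 2 = A₁ ^ 2 + A₂ ^ 2 - 1)
    (hD : D = L ^ 2 - 2 * A₂) :
    A₁ ^ 2 + (A₂ - 2 * E) ^ 2 = 1 + 2 * D * E + 4 * E ^ 2 := by
  subst hD; nlinarith [hKepler]
end

section
/- Let E, A₁, A₂, x ∈ ℂ with x² + 1 ≠ 0, and define A₁' := ((x² − 1)A₁ − 2xA₂ + 4xE)/(x² + 1) and A₂' := (−2xA₁ − (x² − 1)A₂ + 4x²E)/(x² + 1). If A₁² + A₂² − 4EA₂ = 1 + 2DE for some D ∈ ℂ, then (A₁')² + (A₂')² − 4EA₂' = 1 + 2DE. Equivalently, the reflection map j preserves the circle A₁² + (A₂ − 2E)² = 1 + 2DE + 4E² on which the Laplace–Runge–Lenz vector moves. -/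
/-! Translating the Laplace–Runge–Lenz vector by `(0, 2E)` turns `j` into the linear reflection
with matrix `(x² + 1)⁻¹ [[x² - 1, -2x], [-2x, 1 - x²]]`, and `A₁² + A₂² - 4EA₂` into
`B₁² + B₂² - 4E²`. The reflection is orthogonal because `(x² - 1)² + (2x)² = (x² + 1)²`. -/

theorem reflection_sq_add_sq {K : Type*} [Field K] {x : K} (hx : x ^ 2 + 1 ≠ 0) (B₁ B₂ : K) :
    (((x ^ 2 - 1) * B₁ - 2 * x * B₂) / (x ^ 2 + 1)) ^ 2
      + ((-(2 * x * B₁) - (x ^ 2 - 1) * B₂) / (x ^ 2 + 1)) ^ 2 = B₁ ^ 2 + B₂ ^ 2 := by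
  field_simp
  ring

/-- The reflection map j preserves the circle A₁² + A₂² − 4EA₂ = 1 + 2DE
on which the Laplace–Runge–Lenz vector moves. -/
theorem reflection_preserves_circle (D E A₁ A₂ x : ℂ) (hx : x ^ 2 + 1 ≠ 0)
    (A₁' A₂' : ℂ)
    (hA₁' : A₁' = ((x ^ 2 - 1) * A₁ - 2 * x * A₂ + 4 * x * E) / (x ^ 2 + 1))
    (hA₂' : A₂' = (-(2 * x * A₁) - (x ^ 2 - 1) * A₂ + 4 * x ^ 2 * E) / (x ^ 2 + 1))
    (hcirc : A₁ ^ 2 + A₂ ^ 2 - 4 * E * A₂ = 1 + 2 * D * E) :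
    A₁' ^ 2 + A₂' ^ 2 - 4 * E * A₂' = 1 + 2 * D * E := by
  have hB₁ : A₁' = ((x ^ 2 - 1) * A₁ - 2 * x * (A₂ - 2 * E)) / (x ^ 2 + 1) := by
    rw [hA₁']; ring
  have hB₂ : A₂' - 2 * E = (-(2 * x * A₁) - (x ^ 2 - 1) * (A₂ - 2 * E)) / (x ^ 2 + 1) := by
    rw [hA₂']; field_simp; ring
  calc A₁' ^ 2 + A₂' ^ 2 - 4 * E * A₂' = A₁' ^ 2 + (A₂' - 2 * E) ^ 2 - 4 * E ^ 2 := by ring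
    _ = A₁ ^ 2 + (A₂ - 2 * E) ^ 2 - 4 * E ^ 2 := by rw [hB₁, hB₂, reflection_sq_add_sq hx]
    _ = 1 + 2 * D * E := by rw [← hcirc]; ring
end

section
/- Let D, E, A₁, A₂, x ∈ ℂ with x² + 1 ≠ 0, and define A₁' := ((x² − 1)A₁ − 2xA₂ + 4xE)/(x² + 1) and A₂' := (−2xA₁ − (x² − 1)A₂ + 4x²E)/(x² + 1). Then A₂' + D − A₁'x = A₂ + D − A₁x. In particular, if x² + 1 = (A₂ + D − A₁x)² then x² + 1 = (A₂' + D − A₁'x)², so the reflection map j preserves the level set X(D,E). -/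
/-- The reflection map j preserves the quantity A₂ + D − A₁x, and hence the
quadratic equation x² + 1 = (A₂ + D − A₁x)² defining the level set X(D,E). -/
theorem reflection_preserves_wall_equation (D E A₁ A₂ x : ℂ) (hx : x ^ 2 + 1 ≠ 0)
    (A₁' A₂' : ℂ)
    (hA₁' : A₁' = ((x ^ 2 - 1) * A₁ - 2 * x * A₂ + 4 * x * E) / (x ^ 2 + 1))
    (hA₂' : A₂' = (-(2 * x * A₁) - (x ^ 2 - 1) * A₂ + 4 * x ^ 2 * E) / (x ^ 2 + 1)) :
    A₂' + D - A₁' * x = A₂ + D - A₁ * x ∧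
    (x ^ 2 + 1 = (A₂ + D - A₁ * x) ^ 2 → x ^ 2 + 1 = (A₂' + D - A₁' * x) ^ 2) := by
  have key : A₂' + D - A₁' * x = A₂ + D - A₁ * x := by
    subst hA₁' hA₂'
    field_simp
    ring
  exact ⟨key, fun h => key ▸ h⟩
end

section
/- Let D, E ∈ ℂ with D + 2E ≠ 0. Define A₁ := i(−D/2 + 1/(2(D + 2E))), A₂ := −D/2 − 1/(2(D + 2E)), z := i. Then A₁² + A₂² − 4EA₂ = 1 + 2DE and z² = A₁² + (A₂ + D)² − 1; that is, the point Q₊ = (1 : A₁ : A₂ + D : z) of Lemma 1, the image under the Poincaré map t of the point at infinity P₊ = (0 : 1 : i : 0), lies on the curve X̄(D,E). The same holds with i replaced by −i throughout. -/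
/-- Lemma 1: the image Q± = t(P±) of the point at infinity P± = (0 : 1 : ±i : 0)
under the Poincaré map lies on the curve X̄(D,E), i.e. its affine coordinates
satisfy the two defining equations. The statement holds with i replaced by −i. -/
theorem Q_on_curve (D E : ℂ) (hDE : D + 2 * E ≠ 0)
    (ι : ℂ) (hι : ι ^ 2 = -1)
    (A₁ A₂ z : ℂ)
    (hA₁ : A₁ = ι * (-(D / 2) + 1 / (2 * (D + 2 * E))))
    (hA₂ : A₂ = -(D / 2) - 1 / (2 * (D + 2 * E)))
    (hz : z = ι) :
    A₁ ^ 2 + A₂ ^ 2 - 4 * E * A₂ = 1 + 2 * D * E ∧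
    z ^ 2 = A₁ ^ 2 + (A₂ + D) ^ 2 - 1 := by
  subst hA₁ hA₂ hz
  constructor <;> field_simp <;> ring_nf <;>
    rw [hι] <;> ring
end

section
/- Let E, A₁, A₂, x ∈ ℂ with x² + 1 ≠ 0, and let j(x, A₁, A₂) = (x, A₁', A₂') with A₁' = ((x² − 1)A₁ − 2xA₂ + 4xE)/(x² + 1), A₂' = (−2xA₁ − (x² − 1)A₂ + 4x²E)/(x² + 1). Then (A₁', A₂') = (A₁, A₂) if and only if A₁ = x(2E − A₂). -/
/-- The fixed points of the reflection involution j are exactly the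
configurations with A₁ = x(2E − A₂). -/
theorem fixed_points_of_j (E A₁ A₂ x : ℂ) (hx : x ^ 2 + 1 ≠ 0)
    (A₁' A₂' : ℂ)
    (hA₁' : A₁' = ((x ^ 2 - 1) * A₁ - 2 * x * A₂ + 4 * x * E) / (x ^ 2 + 1))
    (hA₂' : A₂' = (-(2 * x * A₁) - (x ^ 2 - 1) * A₂ + 4 * x ^ 2 * E) / (x ^ 2 + 1)) :
    (A₁' = A₁ ∧ A₂' = A₂) ↔ A₁ = x * (2 * E - A₂) := by
  subst hA₁' hA₂'
  rw [div_eq_iff hx, div_eq_iff hx]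
  constructor
  · rintro ⟨h1, h2⟩
    have := sub_eq_zero.mpr h1
    have h2' := sub_eq_zero.mpr h2
    -- combine: from h1: (x²-1)A₁ - 2xA₂ + 4xE = A₁(x²+1) ⟹ -2A₁ - 2xA₂ + 4xE = 0
    linear_combination -this/2
  · intro h
    constructor <;> · rw [h]; ring
end

section
/- Let D, E, A₁, A₂, x ∈ ℂ satisfy A₁² + A₂² − 4EA₂ = 1 + 2DE, x² + 1 = (A₂ + D − A₁x)², and the fixed-point condition of the reflection involution A₁ = x(2E − A₂). Then ((D + 2E)A₂ + 1)² = 1 + 2DE + 4E². Equivalently, at a fixed point of j on X(D,E) the value of A₂ satisfies (D + 2E)A₂ = ±R − 1 where R² = 1 + 2DE + 4E² (the values A₂ = 2E/(1 ± R) asserted in the paper). -/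
/-- At a fixed point of the reflection involution j on the level set X(D,E),
the value of A₂ satisfies ((D + 2E)A₂ + 1)² = 1 + 2DE + 4E². -/
theorem A₂_at_fixed_points_of_j (D E A₁ A₂ x : ℂ)
    (hcirc : A₁ ^ 2 + A₂ ^ 2 - 4 * E * A₂ = 1 + 2 * D * E)
    (hwall : x ^ 2 + 1 = (A₂ + D - A₁ * x) ^ 2)
    (hfix : A₁ = x * (2 * E - A₂)) :
    ((D + 2 * E) * A₂ + 1) ^ 2 = 1 + 2 * D * E + 4 * E ^ 2 := by
  subst hfix
  linear_combination
    (1 + 2 * ((2*E - A₂) * (D + 2*E) - (1 + 2*D*E + 4*E^2))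
      - (x^2 * (2*E - A₂)^2 + (2*E - A₂)^2 - (1 + 2*D*E + 4*E^2))) * hcirc
    - (2*E - A₂)^2 * hwall
end

section
/- Let D, E, R, C, k, s, z, y ∈ ℂ satisfy R² = 1 + 2DE + 4E², C² = (D + 2E)(D + 4E + 2R), k²(D + 4E + 2R) = D + 4E − 2R, s² ≠ 1 and C ≠ 0. Define A₁ := 2iRs/(1 − s²) and A₂ := 2E + R(1 + s²)/(1 − s²), and suppose z² = A₁² + (A₂ + D)² − 1 and y = C⁻¹z(1 − s²). Then y² = (1 − s²)(1 − k²s²). That is, the rational parametrization (A₁, A₂) of the circle A₁² + (A₂ − 2E)² = R² brings the curve X̄(D,E) to the Legendre form y² = (1 − s²)(1 − k²s²) with modulus k² = (D + 4E − 2R)/(D + 4E + 2R). -/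
/-- The rational parametrization of the circle of the Laplace–Runge–Lenz vector
brings the curve X̄(D,E) to the Legendre form y² = (1 − s²)(1 − k²s²). -/
theorem legendre_form (D E R C k s z y : ℂ)
    (hR : R ^ 2 = 1 + 2 * D * E + 4 * E ^ 2)
    (hC : C ^ 2 = (D + 2 * E) * (D + 4 * E + 2 * R))
    (hk : k ^ 2 * (D + 4 * E + 2 * R) = D + 4 * E - 2 * R)
    (hs : s ^ 2 ≠ 1) (hCne : C ≠ 0)
    (A₁ A₂ : ℂ)
    (hA₁ : A₁ = 2 * Complex.I * R * s / (1 - s ^ 2))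
    (hA₂ : A₂ = 2 * E + R * (1 + s ^ 2) / (1 - s ^ 2))
    (hz : z ^ 2 = A₁ ^ 2 + (A₂ + D) ^ 2 - 1)
    (hy : y = C⁻¹ * z * (1 - s ^ 2)) :
    y ^ 2 = (1 - s ^ 2) * (1 - k ^ 2 * s ^ 2) := by
  have hs' : (1 : ℂ) - s ^ 2 ≠ 0 := sub_ne_zero.mpr (Ne.symm hs)
  have key : z ^ 2 * (1 - s ^ 2) ^ 2 = C ^ 2 * ((1 - s ^ 2) * (1 - k ^ 2 * s ^ 2)) := by
    rw [hz, hA₁, hA₂]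
    field_simp
    linear_combination (1 - s ^ 2) ^ 2 * hR + ((s ^ 2 - 1) + k ^ 2 * (s ^ 2 - s ^ 4)) * hC +
      (D + 2 * E) * (s ^ 2 - s ^ 4) * hk + 4 * R ^ 2 * s ^ 2 * Complex.I_sq
  subst hy
  have : (C⁻¹ * z * (1 - s ^ 2)) ^ 2 = C⁻¹ ^ 2 * (z ^ 2 * (1 - s ^ 2) ^ 2) := by ring
  rw [this, key]
  field_simp
end

section
/- Lemma 3: Let D, E ∈ ℝ satisfy 1 + 2DE + 4E² > 0, D + 2E > 0 and D² ≠ 4, and set R := √(1 + 2DE + 4E²). Then there exist real numbers x, A₁, A₂ with A₁² + A₂² − 4EA₂ = 1 + 2DE and x² + 1 = (A₂ + D − A₁x)² (i.e. the real level set X_ℝ(D,E) is non-empty) if and only if D + 4E + 2R > 0. -/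
/-- Lemma 3: for D + 2E > 0 and R = √(1 + 2DE + 4E²) > 0, D² ≠ 4, the real
level set X_ℝ(D,E) is non-empty if and only if D + 4E + 2R > 0. -/
theorem real_level_set_nonempty (D E : ℝ)
    (hR2 : 1 + 2 * D * E + 4 * E ^ 2 > 0)
    (hDE : D + 2 * E > 0) (hD : D ^ 2 ≠ 4)
    (R : ℝ) (hR : R = Real.sqrt (1 + 2 * D * E + 4 * E ^ 2)) :
    (∃ x A₁ A₂ : ℝ,
      A₁ ^ 2 + A₂ ^ 2 - 4 * E * A₂ = 1 + 2 * D * E ∧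
      x ^ 2 + 1 = (A₂ + D - A₁ * x) ^ 2) ↔
    D + 4 * E + 2 * R > 0 := by
  have hRsq : R ^ 2 = 1 + 2 * D * E + 4 * E ^ 2 := by
    rw [hR]; exact Real.sq_sqrt hR2.le
  have hRpos : R > 0 := by rw [hR]; exact Real.sqrt_pos.mpr hR2
  constructor
  · rintro ⟨x, A₁, A₂, h1, h2⟩
    have hcs : 1 ≤ A₁ ^ 2 + (A₂ + D) ^ 2 := by
      nlinarith [sq_nonneg (A₁ + (A₂ + D) * x), sq_nonneg x, sq_nonneg (A₁ * x)]
    have hv : A₂ - 2 * E ≤ R := by nlinarith [sq_nonneg A₁]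
    have h4 : 0 ≤ D + 4 * E + 2 * R := by
      nlinarith [mul_nonneg (sub_nonneg.mpr hv) hDE.le]
    rcases h4.lt_or_eq with h | h
    · exact h
    · exfalso; apply hD
      linear_combination (D + 4 * E - 2 * R) * h.symm + 4 * hRsq
  · intro h
    refine ⟨Real.sqrt ((D + 2 * E + R) ^ 2 - 1), 0, 2 * E + R,
      by linear_combination hRsq, ?_⟩
    have h1 : 0 ≤ (D + 2 * E + R) ^ 2 - 1 := by
      nlinarith [mul_pos hDE h]
    rw [Real.sq_sqrt h1]; ring
end

section
/- Let D, E ∈ ℝ with D + 2E > 0 and 1 + 2DE + 4E² > 0, and set R := √(1 + 2DE + 4E²). Then there exists (A₁, A₂) ∈ ℝ² with A₁² + (A₂ − 2E)² = R² and A₁² + (A₂ + D)² ≥ 1 if and only if D + 4E + 2R ≥ 0. -/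
/-- Existence of a point on the Laplace–Runge–Lenz circle with non-negative
discriminant for intersection with the wall, iff D + 4E + 2R ≥ 0. -/
theorem circle_meets_discriminant_region (D E : ℝ)
    (hDE : D + 2 * E > 0) (hR2 : 1 + 2 * D * E + 4 * E ^ 2 > 0)
    (R : ℝ) (hR : R = Real.sqrt (1 + 2 * D * E + 4 * E ^ 2)) :
    (∃ A₁ A₂ : ℝ,
      A₁ ^ 2 + (A₂ - 2 * E) ^ 2 = R ^ 2 ∧
      A₁ ^ 2 + (A₂ + D) ^ 2 ≥ 1) ↔
    D + 4 * E + 2 * R ≥ 0 := by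
  have hRnn : R ≥ 0 := hR ▸ Real.sqrt_nonneg _
  have hRsq : R ^ 2 = 1 + 2 * D * E + 4 * E ^ 2 := by
    rw [hR, Real.sq_sqrt hR2.le]
  constructor
  · rintro ⟨A₁, A₂, h1, h2⟩
    -- A₂ ≤ 2E + R and A₂ ≥ 2E - R
    have hA2 : (A₂ - 2 * E) ^ 2 ≤ R ^ 2 := by nlinarith [sq_nonneg A₁]
    have hle : A₂ - 2 * E ≤ R := by nlinarith [sq_nonneg (A₂ - 2 * E - R)]
    have hsR : D + 2 * E + R ≥ 1 := by
      by_contra h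
      push_neg at h
      nlinarith [sq_nonneg A₁, mul_nonneg hDE.le (sub_nonneg.2 hle),
        mul_pos hDE (show (0:ℝ) < 1 - (D + 2 * E + R) by linarith)]
    by_contra hB
    push_neg at hB
    nlinarith [sq_nonneg (R - 1 + (D + 2 * E)), mul_pos hDE hDE]
  · intro hB
    refine ⟨0, 2 * E + R, by ring, ?_⟩
    have hkey : D + 2 * E + R ≥ 1 := by
      by_contra h
      push_neg at h
      nlinarith [sq_nonneg (1 - (D + 2 * E) - R)]
    nlinarith
end

section
/- Let D, E ∈ ℝ with D + 2E > 0, 1 + 2DE + 4E² > 0 and D ≠ 2, and set R := √(1 + 2DE + 4E²). Then D + 4E + 2R > 0 if and only if (D < 2 or E ≥ −1/2). In particular the real level set condition D + 4E + 2R > 0 is automatically satisfied when D < 2, while for D > 2 it holds exactly when E ≥ −1/2. -/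
/-- Description of the physical region: under D + 2E > 0, 1 + 2DE + 4E² > 0 and
D ≠ 2, the condition D + 4E + 2R > 0 holds iff (D < 2 or E ≥ −1/2). -/
theorem physical_region (D E : ℝ)
    (hDE : D + 2 * E > 0) (hR2 : 1 + 2 * D * E + 4 * E ^ 2 > 0)
    (hD : D ≠ 2)
    (R : ℝ) (hR : R = Real.sqrt (1 + 2 * D * E + 4 * E ^ 2)) :
    D + 4 * E + 2 * R > 0 ↔ (D < 2 ∨ E ≥ -(1 / 2)) := by
  have hRnn : 0 ≤ R := hR ▸ Real.sqrt_nonneg _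
  have hRsq : R ^ 2 = 1 + 2 * D * E + 4 * E ^ 2 := by
    rw [hR, sq, Real.mul_self_sqrt hR2.le]
  have hRpos : 0 < R := by nlinarith [sq_nonneg R]
  constructor
  · intro h
    by_contra hc
    push_neg at hc
    obtain ⟨h2, hE⟩ := hc
    have hD2 : 2 < D := lt_of_le_of_ne h2 (Ne.symm hD)
    have h4 : D + 4 * E < 0 := by nlinarith
    nlinarith [mul_pos hRpos hRpos, sq_nonneg (2 * R + D + 4 * E),
      mul_pos (show (0:ℝ) < 2 * R + D + 4 * E by linarith)
        (show (0:ℝ) < 2 * R - (D + 4 * E) by linarith)]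
  · intro h
    rcases le_or_gt 0 (D + 4 * E) with h4 | h4
    · linarith
    · have hD2 : D < 2 := by
        rcases h with h | h
        · exact h
        · linarith
      by_contra hc
      push_neg at hc
      nlinarith [mul_nonneg (show (0:ℝ) ≤ -(2 * R + D + 4 * E) by linarith)
        (show (0:ℝ) ≤ 2 * R - (D + 4 * E) by linarith)]
end

section
/- Let D, E, A₁, A₂ ∈ ℝ satisfy A₁² + (A₂ − 2E)² = 1 + 2DE + 4E² and A₁² + (A₂ + D)² ≥ 1. Then (D + 2E)(D + 2A₂) ≥ 0. Consequently, since L² = D + 2A₂ on the level set, the squared angular momentum L² is non-negative on X_ℝ(D,E) only if D + 2E > 0 (for D + 2E < 0 one has L² ≤ 0). -/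
/-- On the real level set, (D + 2E)(D + 2A₂) ≥ 0; hence the squared angular
momentum L² = D + 2A₂ is non-negative only if D + 2E > 0, and for D + 2E < 0
one has L² ≤ 0. -/
theorem angular_momentum_sign (D E A₁ A₂ : ℝ)
    (hcirc : A₁ ^ 2 + (A₂ - 2 * E) ^ 2 = 1 + 2 * D * E + 4 * E ^ 2)
    (hdisc : A₁ ^ 2 + (A₂ + D) ^ 2 ≥ 1) :
    (D + 2 * E) * (D + 2 * A₂) ≥ 0 ∧
    (D + 2 * E < 0 → D + 2 * A₂ ≤ 0) := by
  have h : (D + 2 * E) * (D + 2 * A₂) ≥ 0 := by nlinarith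
  refine ⟨h, fun hn => ?_⟩
  by_contra hp
  push_neg at hp
  nlinarith
end
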